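/- arXiv:1711.06456 — 11 statements merged into one kernel-verified Lean document; each statement's English description precedes it below -/
import Mathlib

section
/- If R is a perfect ring of characteristic p and S is an étale R-algebra, then S is perfect of characteristic p. -/
/-!
Surjectivity of Frobenius: since `R` is perfect, the `p`-th powers form an `R`-subalgebra `T` of
`S`, over which `S` is finite and formally unramified. The diagonal ideal of `S ⊗[T] S` is then
finitely generated, idempotent (unramifiedness) and nil (`(1 ⊗ s - s ⊗ 1) ^ p = 0`), hence zero;
so `T → S` is a finite epimorphism, hence surjective.

Injectivity: the Frobenius `F` of `S` identifies `S ⧸ ker F` with `S` whose `R`-algebra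
structure is twisted by the Frobenius automorphism of `R`, so `S ⧸ ker F` is again étale over `R`.
Thus `ker F` is a finitely generated idempotent ideal; it is also nil, hence zero.
-/

universe u

open Function TensorProduct

lemma sub_pow_of_prime_of_natCast_eq_zero {A : Type*} [CommRing A] {p : ℕ} (hp : p.Prime)
    (hA : (p : A) = 0) (x y : A) : (x - y) ^ p = x ^ p - y ^ p := by
  rcases subsingleton_or_nontrivial A with _ | _
  · exact Subsingleton.elim _ _
  have : Fact p.Prime := ⟨hp⟩
  have : CharP A p := (CharP.charP_iff_prime_eq_zero hp).mpr hA
  exact sub_pow_char x y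

theorem Ideal.eq_bot_of_isIdempotentElem_of_le_nilradical {A : Type*} [CommRing A] {I : Ideal A}
    (hfg : I.FG) (hI : IsIdempotentElem I) (hnil : I ≤ nilradical A) : I = ⊥ := by
  obtain ⟨n, hn⟩ := Ideal.exists_pow_le_of_le_radical_of_fg hnil hfg
  refine eq_bot_iff.mpr ?_
  calc I = I ^ (n + 1) := (hI.pow_eq n.succ_ne_zero).symm
    _ ≤ I ^ n := Ideal.pow_le_pow_right n.le_succ
    _ ≤ ⊥ := hn

theorem KaehlerDifferential.ideal_le_nilradical_of_pow_mem {A B : Type*} [CommRing A] [CommRing B]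
    [Algebra A B] {p : ℕ} (hp : p.Prime) (hB : (p : B) = 0)
    (h : ∀ b : B, b ^ p ∈ (algebraMap A B).range) :
    KaehlerDifferential.ideal A B ≤ nilradical (B ⊗[A] B) := by
  rw [← KaehlerDifferential.span_range_eq_ideal, Ideal.span_le]
  rintro _ ⟨b, rfl⟩
  obtain ⟨a, ha⟩ := h b
  have hp0 : (p : B ⊗[A] B) = 0 := by
    rw [← map_natCast Algebra.TensorProduct.includeLeftRingHom, hB, map_zero]
  refine mem_nilradical.mpr ⟨p, ?_⟩
  rw [sub_pow_of_prime_of_natCast_eq_zero hp hp0, Algebra.TensorProduct.tmul_pow,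
    Algebra.TensorProduct.tmul_pow, one_pow, ← ha, ← Algebra.TensorProduct.tmul_one_eq_one_tmul,
    sub_self]

theorem Algebra.FormallyUnramified.surjective_algebraMap_of_pow_mem {A B : Type*} [CommRing A]
    [CommRing B] [Algebra A B] [FormallyUnramified A B] [FiniteType A B] {p : ℕ} (hp : p.Prime)
    (hB : (p : B) = 0) (h : ∀ b : B, b ^ p ∈ (algebraMap A B).range) :
    Surjective (algebraMap A B) := by
  have : Algebra.IsIntegral A B := ⟨fun b => by
    obtain ⟨a, ha⟩ := h b
    exact ⟨_, Polynomial.monic_X_pow_sub_C a hp.ne_zero, by simp [ha]⟩⟩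
  have : Module.Finite A B := Algebra.IsIntegral.finite
  have hbot : KaehlerDifferential.ideal A B = ⊥ :=
    Ideal.eq_bot_of_isIdempotentElem_of_le_nilradical (KaehlerDifferential.ideal_fg A B)
      ((Ideal.cotangent_subsingleton_iff _).mp (inferInstanceAs (Subsingleton Ω[B⁄A])))
      (KaehlerDifferential.ideal_le_nilradical_of_pow_mem hp hB h)
  refine Algebra.isEpi_iff_surjective_algebraMap_of_finite.mp
    ((Algebra.isEpi_iff_forall_one_tmul_eq A B).mpr fun b => ?_)
  have hb : 1 ⊗ₜ b - b ⊗ₜ 1 ∈ KaehlerDifferential.ideal A B := by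
    rw [← KaehlerDifferential.span_range_eq_ideal]
    exact Ideal.subset_span ⟨b, rfl⟩
  rwa [hbot, Ideal.mem_bot, sub_eq_zero] at hb

theorem Ideal.eq_bot_of_formallySmooth_quotient {R S : Type*} [CommRing R] [CommRing S]
    [Algebra R S] [Algebra.FormallyUnramified R S] [Algebra.FinitePresentation R S] (I : Ideal S)
    [Algebra.FormallySmooth R (S ⧸ I)] [Algebra.FinitePresentation R (S ⧸ I)]
    (hI : I ≤ nilradical S) : I = ⊥ := by
  have := Algebra.FormallySmooth.of_restrictScalars R S (S ⧸ I)
  have hidem : IsIdempotentElem I := by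
    simpa [Ideal.Quotient.algebraMap_eq, Ideal.mk_ker] using
      (Algebra.FormallySmooth.iff_of_surjective Ideal.Quotient.mk_surjective).mp this
  have hfg : I.FG := by
    simpa using Algebra.FinitePresentation.ker_fG_of_surjective (Ideal.Quotient.mkₐ R I)
      Ideal.Quotient.mk_surjective
  exact eq_bot_of_isIdempotentElem_of_le_nilradical hfg hidem hI

theorem surjective_frobenius_of_formallyUnramified {R S : Type*} [CommRing R] [CommRing S]
    [Algebra R S] (p : ℕ) [Fact p.Prime] [CharP S p] [Algebra.FormallyUnramified R S]
    [Algebra.FiniteType R S]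
    (hR : Surjective fun x : R => x ^ p) : Surjective (frobenius S p) := by
  let T : Subalgebra R S :=
    { (frobenius S p).rangeS with
      algebraMap_mem' := fun r => by
        obtain ⟨u, rfl⟩ := hR r
        exact ⟨algebraMap R S u, (map_pow _ u p).symm⟩ }
  have := Algebra.FormallyUnramified.of_restrictScalars R T S
  have := Algebra.FiniteType.of_restrictScalars_finiteType R T S
  have hT := Algebra.FormallyUnramified.surjective_algebraMap_of_pow_mem (A := T) Fact.out
    (CharP.cast_eq_zero S p) fun s => ⟨⟨s ^ p, s, rfl⟩, rfl⟩
  intro s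
  obtain ⟨⟨_, x, rfl⟩, hx⟩ := hT s
  exact ⟨x, hx⟩

section Frobenius

variable {R S : Type u} [CommRing R] [CommRing S] [Algebra R S] (p : ℕ)

theorem Algebra.Etale.quotient_ker_frobenius [ExpChar R p] [ExpChar S p] [Algebra.Etale R S]
    (hR : Bijective (frobenius R p)) (hS : Surjective (frobenius S p)) :
    Algebra.Etale R (S ⧸ RingHom.ker (frobenius S p)) := by
  let eR := RingEquiv.ofBijective (frobenius R p) hR
  let eS := RingHom.quotientKerEquivOfSurjective hS
  have hmap : algebraMap R (S ⧸ RingHom.ker (frobenius S p)) =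
      eS.symm.toRingHom.comp ((algebraMap R S).comp eR.toRingHom) := by
    ext r
    apply eS.injective
    simp [eS, eR, ← Ideal.Quotient.mk_algebraMap, RingHom.quotientKerEquivOfSurjective_apply_mk,
      frobenius_def]
  rw [← RingHom.etale_algebraMap, hmap]
  exact RingHom.Etale.respectsIso.1 _ _
    (RingHom.Etale.respectsIso.2 _ _ (RingHom.etale_algebraMap.mpr ‹_›))

theorem injective_frobenius_of_etale [ExpChar R p] [ExpChar S p] [Algebra.Etale R S]
    (hR : Bijective (frobenius R p)) (hS : Surjective (frobenius S p)) :
    Injective (frobenius S p) := by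
  have := Algebra.Etale.quotient_ker_frobenius p hR hS
  exact (RingHom.injective_iff_ker_eq_bot _).mpr
    (Ideal.eq_bot_of_formallySmooth_quotient (R := R) _ fun x hx => ⟨p, hx⟩)

theorem PerfectRing.of_etale [Fact p.Prime] [CharP R p] [CharP S p] [PerfectRing R p]
    [Algebra.Etale R S] : PerfectRing S p :=
  have hS := surjective_frobenius_of_formallyUnramified p (_root_.bijective_frobenius R p).2
  ⟨⟨injective_frobenius_of_etale p (_root_.bijective_frobenius R p) hS, hS⟩⟩

end Frobenius

/-- If `R` is a perfect ring of characteristic `p` and `S` is an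
étale `R`-algebra, then `S` is perfect of characteristic `p`. -/
theorem stmt_1 {p : ℕ} (hp : p.Prime) (R S : Type u) [CommRing R] [CommRing S] [Algebra R S]
    [CharP R p] (hF : Function.Bijective fun x : R => x ^ p)
    [Algebra.Etale R S] :
    (p : S) = 0 ∧ Function.Bijective fun x : S => x ^ p := by
  have hp0 : (p : S) = 0 := by rw [← map_natCast (algebraMap R S), CharP.cast_eq_zero, map_zero]
  refine ⟨hp0, ?_⟩
  rcases subsingleton_or_nontrivial S with _ | _
  · exact ⟨fun _ _ _ => Subsingleton.elim _ _, fun y => ⟨y, Subsingleton.elim _ _⟩⟩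
  have : Fact p.Prime := ⟨hp⟩
  have : CharP S p := (CharP.charP_iff_prime_eq_zero hp).mpr hp0
  have : PerfectRing R p := ⟨hF⟩
  exact (PerfectRing.of_etale (R := R) p).bijective_frobenius
end

section
/- Let R be a p-torsion free perfectoid ring (p-adically complete, with ϖ ∈ R such that (ϖ^p) = (p) and x ↦ x^p inducing an isomorphism R/ϖ ≅ R/p). Then R is reduced. -/
/-- The defining conditions on `ϖ` for a `p`-torsion free perfectoid ring:
`(ϖ^p) = (p)` and the map `R/ϖ → R/p`, `x ↦ x^p`, is bijective
(stated elementwise: surjectivity of `x ↦ x^p mod p` and the kernel condition). -/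
def PerfectoidCond (p : ℕ) (R : Type*) [CommRing R] (ϖ : R) : Prop :=
  Ideal.span {ϖ ^ p} = Ideal.span {(p : R)} ∧
  (∀ y : R, ∃ x : R, y - x ^ p ∈ Ideal.span {(p : R)}) ∧
  (∀ x : R, x ^ p ∈ Ideal.span {(p : R)} → x ∈ Ideal.span {ϖ})

/-!
If `x ^ 2 = 0` then `x ^ p = 0`, so injectivity of Frobenius `R/ϖ → R/p` gives `x = ϖ y`.
Since `ϖ` divides the nonzerodivisor `p`, it is itself a nonzerodivisor, whence `y ^ 2 = 0`;
iterating, `ϖ ^ n ∣ x` for all `n`. As `p ∣ ϖ ^ p`, `x` lies in every power of `(p)`, so `x = 0`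
by `p`-adic separatedness.
-/

open scoped nonZeroDivisors

theorem mem_nonZeroDivisors_of_dvd {M : Type*} [CommMonoidWithZero M] {a b : M}
    (hb : b ∈ M⁰) (hab : a ∣ b) : a ∈ M⁰ := by
  obtain ⟨c, rfl⟩ := hab
  exact (mul_mem_nonZeroDivisors.mp hb).1

theorem pow_dvd_of_sq_eq_zero {M : Type*} [CommMonoidWithZero M] {ϖ : M} (hϖ : ϖ ∈ M⁰)
    (h : ∀ x : M, x ^ 2 = 0 → ϖ ∣ x) (n : ℕ) {x : M} (hx : x ^ 2 = 0) : ϖ ^ n ∣ x := by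
  induction n generalizing x with
  | zero => simp
  | succ n ih =>
    obtain ⟨y, rfl⟩ := h x hx
    have hy : y ^ 2 = 0 := by
      rw [mul_pow] at hx
      exact (mul_left_mem_nonZeroDivisors_eq_zero_iff (pow_mem hϖ 2)).mp hx
    rw [pow_succ']
    exact mul_dvd_mul_left ϖ (ih hy)

theorem IsHausdorff.eq_zero_of_forall_pow_dvd {R : Type*} [CommRing R] {a x : R}
    (h : IsHausdorff (Ideal.span {a}) R) (hx : ∀ n : ℕ, a ^ n ∣ x) : x = 0 :=
  h.haus x fun n => by
    rw [SModEq.zero, smul_eq_mul, Ideal.mul_top, Ideal.span_singleton_pow,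
      Ideal.mem_span_singleton]
    exact hx n

namespace PerfectoidCond

variable {p : ℕ} {R : Type*} [CommRing R] {ϖ : R}

theorem natCast_dvd_pow (hϖ : PerfectoidCond p R ϖ) : (p : R) ∣ ϖ ^ p :=
  Ideal.span_singleton_le_span_singleton.mp hϖ.1.le

theorem pow_dvd_natCast (hϖ : PerfectoidCond p R ϖ) : ϖ ^ p ∣ (p : R) :=
  Ideal.span_singleton_le_span_singleton.mp hϖ.1.ge

theorem dvd_of_sq_eq_zero (hp : 2 ≤ p) (hϖ : PerfectoidCond p R ϖ) {x : R} (hx : x ^ 2 = 0) :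
    ϖ ∣ x := by
  refine Ideal.mem_span_singleton.mp (hϖ.2.2 x ?_)
  rw [pow_eq_zero_of_le hp hx]
  exact Ideal.zero_mem _

end PerfectoidCond

/-- a p-torsion free perfectoid ring is reduced. -/
theorem stmt_3 {p : ℕ} (hp : p.Prime) (R : Type*) [CommRing R]
    (hnzd : (p : R) ∈ nonZeroDivisors R)
    (hc : IsAdicComplete (Ideal.span {(p : R)}) R)
    (ϖ : R) (hϖ : PerfectoidCond p R ϖ) :
    IsReduced R := by
  have hϖ_nzd : ϖ ∈ R⁰ :=
    mem_nonZeroDivisors_of_dvd hnzd ((dvd_pow_self ϖ hp.ne_zero).trans hϖ.pow_dvd_natCast)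
  refine (isReduced_iff_pow_one_lt 2 one_lt_two).mpr fun x hx => ?_
  refine hc.toIsHausdorff.eq_zero_of_forall_pow_dvd fun n => ?_
  calc (p : R) ^ n ∣ (ϖ ^ p) ^ n := pow_dvd_pow_of_dvd hϖ.natCast_dvd_pow n
    _ = ϖ ^ (p * n) := (pow_mul ϖ p n).symm
    _ ∣ x := pow_dvd_of_sq_eq_zero hϖ_nzd (fun _ => hϖ.dvd_of_sq_eq_zero hp.two_le) _ hx
end

section
/- Let p be a prime and R a p-adically complete (and separated) commutative ring. Then the reduction-mod-p map induces an isomorphism of multiplicative monoids from the inverse limit of R along the p-power maps x ↦ x^p to the inverse limit of R/p along the p-power maps. -/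
/-- The inverse limit of copies of `L` along the `p`-power maps `x ↦ x^p`,
as a multiplicative monoid (a submonoid of the product monoid). -/
def limMonoid (p : ℕ) (L : Type*) [CommMonoid L] : Submonoid (ℕ → L) where
  carrier := {g | ∀ n, g (n + 1) ^ p = g n}
  mul_mem' := by
    intro a b ha hb n
    simp only [Pi.mul_apply, mul_pow, ha n, hb n]
  one_mem' := by intro n; simp

section aux

variable {p : ℕ} {R : Type*} [CommRing R]

private lemma smodeq_iff (I : Ideal R) (x y : R) :
    x ≡ y [SMOD I • (⊤ : Submodule R R)] ↔ x - y ∈ I := by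
  rw [SModEq.sub_mem, smul_eq_mul, Ideal.mul_top]

/-- If `f (n+1) ^ p = f n` for all n, then `f n = f (n+m) ^ p ^ m`. -/
private lemma pow_shift {f : ℕ → R} (hf : ∀ n, f (n + 1) ^ p = f n) (n m : ℕ) :
    f n = f (n + m) ^ p ^ m := by
  induction m with
  | zero => simp
  | succ m ih =>
    rw [ih, ← hf (n + m), pow_succ, pow_mul]
    ring_nf

end aux

/-- for a p-adically complete ring R, reduction mod p induces an
isomorphism of multiplicative monoids lim_{x↦x^p} R ≅ lim_{x↦x^p} (R/p). -/
theorem stmt_4 {p : ℕ} (hp : p.Prime) (R : Type*) [CommRing R]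
    (hc : IsAdicComplete (Ideal.span {(p : R)}) R) :
    ∃ e : limMonoid p R ≃* limMonoid p (R ⧸ Ideal.span {(p : R)}),
      ∀ (f : limMonoid p R) (n : ℕ),
        ((e f : ℕ → R ⧸ Ideal.span {(p : R)}) n) =
          Ideal.Quotient.mk (Ideal.span {(p : R)}) ((f : ℕ → R) n) := by
  set I : Ideal R := Ideal.span {(p : R)} with hI
  let π := Ideal.Quotient.mk I
  have hmem : ∀ (m : ℕ) (x : R), x ∈ I ^ m ↔ (p : R) ^ m ∣ x := by
    intro m x
    rw [hI, Ideal.span_singleton_pow, Ideal.mem_span_singleton]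
  -- the forward monoid hom
  have hmap : ∀ f : limMonoid p R, (fun n => π ((f : ℕ → R) n)) ∈ limMonoid p (R ⧸ I) := by
    intro f n
    have := f.2 n
    simp only [limMonoid, Submonoid.mem_mk] at this ⊢
    rw [← map_pow]
    exact congrArg π (f.2 n)
  let φ : limMonoid p R →* limMonoid p (R ⧸ I) :=
    { toFun := fun f => ⟨fun n => π ((f : ℕ → R) n), hmap f⟩
      map_one' := Subtype.ext (funext fun n => map_one π)
      map_mul' := fun a b => Subtype.ext (funext fun n => map_mul π _ _) }
  -- injectivity
  have hinj : Function.Injective φ := by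
    intro f f' h
    have hmk : ∀ n, π ((f : ℕ → R) n) = π ((f' : ℕ → R) n) := by
      intro n; exact congrFun (congrArg Subtype.val h) n
    have hdvd : ∀ n, (p : R) ∣ (f : ℕ → R) n - (f' : ℕ → R) n := by
      intro n
      have : (f : ℕ → R) n - (f' : ℕ → R) n ∈ I := Ideal.Quotient.eq.mp (hmk n)
      rwa [hI, Ideal.mem_span_singleton] at this
    ext n
    refine sub_eq_zero.1 (hc.haus' _ ?_)
    intro m
    rw [smodeq_iff]
    rw [hmem]
    calc (p : R) ^ m ∣ (p : R) ^ (m + 1) := pow_dvd_pow _ (Nat.le_succ m)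
      _ ∣ (f : ℕ → R) (n + m) ^ p ^ m - (f' : ℕ → R) (n + m) ^ p ^ m - 0 := by
          rw [sub_zero]; exact dvd_sub_pow_of_dvd_sub (hdvd (n + m)) m
      _ = (f : ℕ → R) n - (f' : ℕ → R) n - 0 := by
          rw [← pow_shift f.2 n m, ← pow_shift f'.2 n m]
  -- surjectivity
  have hsurj : Function.Surjective φ := by
    intro g
    -- choose lifts
    choose y hy using fun n => Ideal.Quotient.mk_surjective ((g : ℕ → (R ⧸ I)) n)
    have hstep : ∀ n, (p : R) ∣ y (n + 1) ^ p - y n := by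
      intro n
      have : π (y (n + 1) ^ p - y n) = 0 := by
        rw [map_sub, map_pow, hy, hy, g.2 n, sub_self]
      rw [← Ideal.mem_span_singleton, ← hI]
      exact (Ideal.Quotient.eq_zero_iff_mem).1 this
    -- the Cauchy sequence for each n
    set F : ℕ → ℕ → R := fun n m => y (n + m) ^ p ^ m with hF
    have hstep' : ∀ n m, (p : R) ^ (m + 1) ∣ F n (m + 1) - F n m := by
      intro n m
      have h1 : (p : R) ^ (m + 1) ∣ (y (n + m + 1) ^ p) ^ p ^ m - y (n + m) ^ p ^ m :=
        dvd_sub_pow_of_dvd_sub (hstep (n + m)) m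
      have h2 : (y (n + m + 1) ^ p) ^ p ^ m = F n (m + 1) := by
        rw [hF]; simp only []
        rw [← pow_mul, show n + (m + 1) = n + m + 1 by ring, pow_succ, mul_comm]
      rwa [h2] at h1
    have htel : ∀ n m k, m ≤ k → (p : R) ^ m ∣ F n k - F n m := by
      intro n m k hmk
      obtain ⟨j, rfl⟩ := Nat.exists_eq_add_of_le hmk
      induction j with
      | zero => simp
      | succ j ih =>
        have : F n (m + (j + 1)) - F n m =
            (F n (m + j + 1) - F n (m + j)) + (F n (m + j) - F n m) := by
          rw [show m + (j + 1) = m + j + 1 by ring]; ring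
        rw [this]
        exact dvd_add (dvd_trans (pow_dvd_pow _ (by omega)) (hstep' n (m + j)))
          (ih (by omega))
    -- get the limits
    have hprec : ∀ n, ∃ L, ∀ m, F n m ≡ L [SMOD I ^ m • (⊤ : Submodule R R)] := by
      intro n
      refine hc.toIsPrecomplete.prec ?_
      intro m k hmk
      exact ((smodeq_iff _ _ _).2 ((hmem m _).2 (htel n m k hmk))).symm
    choose L hL using hprec
    have hLd : ∀ n m, (p : R) ^ m ∣ F n m - L n := by
      intro n m
      have := hL n m
      rwa [smodeq_iff, hmem] at this
    -- L is compatible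
    have hcomp : ∀ n, L (n + 1) ^ p = L n := by
      intro n
      refine sub_eq_zero.1 (hc.haus' _ ?_)
      intro m
      rw [smodeq_iff, hmem]
      have h1 : (p : R) ^ m ∣ F (n + 1) m ^ p - L (n + 1) ^ p :=
        dvd_trans (hLd (n + 1) m) (sub_dvd_pow_sub_pow _ _ p)
      have h2 : F (n + 1) m ^ p = F n (m + 1) := by
        rw [hF]; simp only []
        rw [← pow_mul, show n + 1 + m = n + (m + 1) by ring, pow_succ]
      have h3 : (p : R) ^ m ∣ F n (m + 1) - L n :=
        dvd_trans (pow_dvd_pow _ (Nat.le_succ m)) (hLd n (m + 1))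
      have : L (n + 1) ^ p - L n - 0 =
          (F n (m + 1) - L n) - (F (n + 1) m ^ p - L (n + 1) ^ p) - (F n (m + 1) - F (n + 1) m ^ p) := by
        ring
      rw [this]
      exact dvd_sub (dvd_sub h3 h1) (by rw [h2, sub_self]; exact dvd_zero _)
    -- L reduces to g
    have hred : ∀ n, π (L n) = (g : ℕ → (R ⧸ I)) n := by
      intro n
      have h1 : (p : R) ∣ F n 1 - L n := by
        have := hLd n 1; rwa [pow_one] at this
      have h2 : (p : R) ∣ F n 1 - y n := by
        show (p : R) ∣ y (n + 1) ^ p ^ 1 - y n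
        rw [pow_one]; exact hstep n
      have h3 : (p : R) ∣ y n - L n := by
        have : y n - L n = (F n 1 - L n) - (F n 1 - y n) := by ring
        rw [this]; exact dvd_sub h1 h2
      rw [← hy n]
      rw [Ideal.Quotient.eq, hI, Ideal.mem_span_singleton]
      exact dvd_sub_comm.mp h3
    refine ⟨⟨L, hcomp⟩, ?_⟩
    ext n
    exact hred n
  refine ⟨MulEquiv.ofBijective φ ⟨hinj, hsurj⟩, ?_⟩
  intro f n
  rfl
end

section
/- Let R be a p-torsion free perfectoid ring with ϖ as in the definition. Then there exists a sequence (ϖ_n)_{n ≥ 1} of elements of R with ϖ_{n+1}^p ≡ ϖ_n, ϖ_1 generating (ϖ), and (ϖ_n^{p^n}) = (p) for every n ≥ 1. -/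
/-- Membership version of `dvd_sub_pow_of_dvd_sub`. -/
lemma pow_cong_of_cong {R : Type*} [CommRing R] {p : ℕ} {a b : R}
    (h : a - b ∈ Ideal.span {(p : R)}) (k : ℕ) :
    a ^ p ^ k - b ^ p ^ k ∈ Ideal.span {(p : R) ^ (k + 1)} := by
  rw [Ideal.mem_span_singleton] at h ⊢
  simpa using dvd_sub_pow_of_dvd_sub h k

/-- Congruences are preserved by taking `n`-th powers. -/
lemma pow_mem_of_sub_mem {R : Type*} [CommRing R] {J : Ideal R} {a b : R}
    (h : a - b ∈ J) (n : ℕ) : a ^ n - b ^ n ∈ J := by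
  obtain ⟨c, hc⟩ := sub_dvd_pow_sub_pow a b n
  rw [hc]
  exact J.mul_mem_right c h

/-- existence of a p-power compatible sequence of p-th roots
(indexed so that ϖs n corresponds to ϖ_{n+1}). -/
theorem stmt_5 {p : ℕ} (hp : p.Prime) (R : Type*) [CommRing R]
    (hnzd : (p : R) ∈ nonZeroDivisors R)
    (hc : IsAdicComplete (Ideal.span {(p : R)}) R)
    (ϖ : R) (hϖ : PerfectoidCond p R ϖ) :
    ∃ ϖs : ℕ → R, (∀ n, ϖs (n + 1) ^ p = ϖs n) ∧
      Ideal.span {ϖs 0} = Ideal.span {ϖ} ∧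
      ∀ n, Ideal.span {ϖs n ^ p ^ (n + 1)} = Ideal.span {(p : R)} := by
  obtain ⟨hspan, hsurj, hker⟩ := hϖ
  set I : Ideal R := Ideal.span {(p : R)} with hI
  haveI : IsAdicComplete I R := hc
  -- step 1: sequence y with y 0 = ϖ, y n ≡ y (n+1)^p mod p
  obtain ⟨y, hy0, hy⟩ : ∃ y : ℕ → R, y 0 = ϖ ∧ ∀ n, y n - y (n + 1) ^ p ∈ I := by
    choose g hg using hsurj
    exact ⟨fun n => Nat.rec ϖ (fun _ a => g a) n, rfl, fun n => hg _⟩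
  -- the submodule identity
  have hsm : ∀ m : ℕ, (I ^ m • ⊤ : Submodule R R) = Ideal.span {(p : R) ^ m} := by
    intro m
    rw [smul_eq_mul, Ideal.mul_top, hI, Ideal.span_singleton_pow]
  -- step 2 : for each n, the limit of y (n+m) ^ p ^ m exists
  have key : ∀ n : ℕ, ∃ z : R, ∀ m : ℕ,
      y (n + m) ^ p ^ m - z ∈ Ideal.span {(p : R) ^ m} := by
    intro n
    have step : ∀ j : ℕ, y (n + j) ^ p ^ j - y (n + (j + 1)) ^ p ^ (j + 1) ∈
        Ideal.span {(p : R) ^ (j + 1)} := by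
      intro j
      have h2 := pow_cong_of_cong (p := p) (a := y (n + j))
        (b := y (n + (j + 1)) ^ p) (hy (n + j)) j
      rwa [← pow_mul, ← pow_succ'] at h2
    have cauchy : ∀ {m k : ℕ}, m ≤ k →
        (fun m => y (n + m) ^ p ^ m) m ≡ (fun m => y (n + m) ^ p ^ m) k
          [SMOD (I ^ m • ⊤ : Submodule R R)] := by
      intro m k hmk
      rw [SModEq.sub_mem, hsm]
      induction k, hmk using Nat.le_induction with
      | base => simp
      | succ k hmk ih =>
        have h1 : y (n + k) ^ p ^ k - y (n + (k + 1)) ^ p ^ (k + 1) ∈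
            Ideal.span {(p : R) ^ m} := by
          refine Ideal.span_singleton_le_span_singleton.mpr ?_ (step k)
          exact pow_dvd_pow _ (by omega)
        have h3 := Ideal.add_mem _ ih h1
        rwa [sub_add_sub_cancel] at h3
    obtain ⟨z, hz⟩ := IsPrecomplete.prec hc.toIsPrecomplete cauchy
    refine ⟨z, fun m => ?_⟩
    have h4 := hz m
    rw [SModEq.sub_mem, hsm] at h4
    simpa using h4
  choose z hz using key
  -- uniqueness helper from Hausdorff separation
  have uniq : ∀ a b : R, (∀ m : ℕ, a - b ∈ Ideal.span {(p : R) ^ m}) → a = b := by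
    intro a b h
    have h5 := IsHausdorff.haus hc.toIsHausdorff (a - b) (fun m => by
      rw [SModEq.zero, hsm]; exact h m)
    exact sub_eq_zero.mp h5
  -- compatibility: z (n+1) ^ p = z n
  have compat : ∀ n, z (n + 1) ^ p = z n := by
    intro n
    refine uniq _ _ (fun m => ?_)
    have h6 : z (n + 1) ^ p - (y (n + 1 + m) ^ p ^ m) ^ p ∈ Ideal.span {(p : R) ^ m} := by
      refine pow_mem_of_sub_mem ?_ p
      have h6' := hz (n + 1) m
      simpa using (neg_mem_iff.mpr h6')
    have h7 : y (n + (m + 1)) ^ p ^ (m + 1) - z n ∈ Ideal.span {(p : R) ^ m} := by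
      refine Ideal.span_singleton_le_span_singleton.mpr ?_ (hz n (m + 1))
      exact pow_dvd_pow _ (Nat.le_succ m)
    have heq : (y (n + 1 + m) ^ p ^ m) ^ p = y (n + (m + 1)) ^ p ^ (m + 1) := by
      have harg : n + 1 + m = n + (m + 1) := by omega
      rw [← pow_mul, ← pow_succ, harg]
    have hsplit : z (n + 1) ^ p - z n
        = (z (n + 1) ^ p - (y (n + 1 + m) ^ p ^ m) ^ p)
          + (y (n + (m + 1)) ^ p ^ (m + 1) - z n) := by rw [heq]; ring
    rw [hsplit]
    exact Ideal.add_mem _ h6 h7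
  -- z n ≡ y n mod p
  have hzy : ∀ n, y n - z n ∈ I := by
    intro n
    have h8 := hz n 1
    have h9 : y n - y (n + 1) ^ p ∈ I := hy n
    have heq2 : y n - z n = (y n - y (n + 1) ^ p) + (y (n + 1) ^ p ^ 1 - z n) := by
      simp only [pow_one]; ring
    rw [heq2]
    refine Ideal.add_mem _ h9 ?_
    have : Ideal.span {(p : R) ^ 1} = I := by rw [pow_one]
    rw [← this]
    exact h8
  -- z 0 = ϖ * unit
  obtain ⟨c, hc0⟩ : ∃ c, ϖ - z 0 = (p : R) * c := by
    have := hzy 0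
    rw [hy0, hI, Ideal.mem_span_singleton] at this
    exact this
  obtain ⟨b, hb⟩ : ∃ b, (p : R) = ϖ ^ p * b := by
    have : (p : R) ∈ Ideal.span {ϖ ^ p} := by
      rw [hspan]; exact Ideal.mem_span_singleton_self _
    exact Ideal.mem_span_singleton.mp this
  have hp2 : 2 ≤ p := hp.two_le
  set x : R := -(ϖ ^ (p - 1) * (b * c)) with hx
  have hz0 : z 0 = ϖ * (1 + x) := by
    have hϖp : ϖ ^ p = ϖ * ϖ ^ (p - 1) := by
      conv_lhs => rw [show p = 1 + (p - 1) by omega]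
      rw [pow_add, pow_one]
    have : z 0 = ϖ - (p : R) * c := by rw [← hc0]; ring
    rw [this, hb, hϖp, hx]; ring
  -- x is topologically nilpotent : x ^ p ∈ I
  have hxp : x ^ p ∈ I := by
    rw [← hspan, Ideal.mem_span_singleton, hx]
    have h10 : ϖ ^ p ∣ (ϖ ^ (p - 1)) ^ p := by
      rw [← pow_mul]
      exact pow_dvd_pow ϖ (Nat.le_mul_of_pos_left p (by omega))
    calc ϖ ^ p ∣ (ϖ ^ (p - 1)) ^ p * ((-(b * c)) ^ p) := h10.mul_right _
      _ = (-(ϖ ^ (p - 1) * (b * c))) ^ p := by rw [neg_pow, neg_pow, mul_pow]; ring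
  -- hence 1 + x is a unit
  have hjac : I ≤ (⊥ : Ideal R).jacobson := IsAdicComplete.le_jacobson_bot (I := I)
  have hxjac : x ∈ (⊥ : Ideal R).jacobson := by
    rw [Ideal.jacobson]
    refine Ideal.mem_sInf.mpr (fun J hJ => ?_)
    have hJx : x ^ p ∈ J := by
      have : (⊥ : Ideal R).jacobson ≤ J := by rw [Ideal.jacobson]; exact sInf_le hJ
      exact this (hjac hxp)
    exact hJ.2.isPrime.mem_of_pow_mem p hJx
  have hu : IsUnit (1 + x) := by
    have := Ideal.mem_jacobson_bot.mp hxjac 1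
    simpa [add_comm] using this
  -- conclusion
  refine ⟨z, compat, ?_, ?_⟩
  · rw [hz0]
    exact Ideal.span_singleton_mul_right_unit hu ϖ
  · have zpow : ∀ n, z n ^ p ^ n = z 0 := by
      intro n
      induction n with
      | zero => simp
      | succ n ih =>
        calc z (n + 1) ^ p ^ (n + 1) = (z (n + 1) ^ p) ^ p ^ n := by
              rw [← pow_mul, pow_succ']
          _ = z n ^ p ^ n := by rw [compat n]
          _ = z 0 := ih
    intro n
    have : z n ^ p ^ (n + 1) = ϖ ^ p * (1 + x) ^ p := by
      calc z n ^ p ^ (n + 1) = (z n ^ p ^ n) ^ p := by rw [← pow_mul, pow_succ]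
        _ = (ϖ * (1 + x)) ^ p := by rw [zpow n, hz0]
        _ = ϖ ^ p * (1 + x) ^ p := mul_pow _ _ _
    rw [this, Ideal.span_singleton_mul_right_unit (hu.pow p) (ϖ ^ p), hspan]
end

section
/- Let R be a p-torsion free perfectoid ring with compatible p-power roots ϖ_n of (a generator of) (p) as above. Then for each n ≥ 1, the ideal (ϖ_n) ⊆ R is the preimage of the kernel of the p^n-power Frobenius of R/p, and the map R/ϖ_n → R/p induced by x ↦ x^{p^n} is an isomorphism. -/
/-!
Induction on `n`. The base case is the defining property of `ϖ`. For the step, write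
`b = ϖ_{n+1}` and `a = b^p = ϖ_n`. If `x^{p^{n+1}} ∈ (p)`, then `x^p = a t` by induction;
lifting `t ≡ s^p mod p` gives `x^p ≡ (b s)^p mod p`, and since the Frobenius is additive
mod `p`, `(x - b s)^p ∈ (p)`, so `x - b s ∈ (ϖ) ⊆ (b)`. Surjectivity of `x ↦ x^{p^n}` mod `p`
is surjectivity of `x ↦ x^p` iterated.
-/

section

variable {R : Type*} [CommRing R]

theorem prime_dvd_sub_pow_of_dvd_pow_sub_pow {p : ℕ} (hp : p.Prime) {x y : R}
    (h : (p : R) ∣ x ^ p - y ^ p) : (p : R) ∣ (x - y) ^ p := by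
  obtain ⟨r, hr⟩ := exists_add_pow_prime_eq hp (x - y) y
  have hxy : (x - y) ^ p = x ^ p - y ^ p - p * ((x - y) * y * r) := by
    rw [sub_add_cancel] at hr
    linear_combination -hr
  rw [hxy]
  exact dvd_sub h (dvd_mul_right _ _)

theorem Ideal.exists_sub_pow_pow_mem {I : Ideal R} {q : ℕ} (h : ∀ y : R, ∃ x, y - x ^ q ∈ I)
    (m : ℕ) (y : R) : ∃ x, y - x ^ q ^ m ∈ I := by
  simp only [← Ideal.Quotient.eq, map_pow] at h ⊢
  induction m generalizing y with
  | zero => exact ⟨y, by rw [pow_zero, pow_one]⟩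
  | succ m ih =>
    obtain ⟨x, hx⟩ := ih y
    obtain ⟨x', hx'⟩ := h x
    exact ⟨x', by rw [hx, hx', ← pow_mul, ← pow_succ']⟩

namespace PerfectoidCond

variable {p : ℕ} {ϖ : R}

theorem dvd_iff_dvd_pow (hϖ : PerfectoidCond p R ϖ) (x : R) : ϖ ∣ x ↔ (p : R) ∣ x ^ p := by
  obtain ⟨hspan, -, hker⟩ := hϖ
  refine ⟨fun hx => ?_, fun hx => ?_⟩
  · exact (Ideal.span_singleton_le_span_singleton.mp hspan.le).trans (pow_dvd_pow_of_dvd hx p)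
  · simpa only [Ideal.mem_span_singleton] using hker x (Ideal.mem_span_singleton.mpr hx)

theorem dvd_iff_dvd_pow_of_pow_eq (hϖ : PerfectoidCond p R ϖ) (hp : p.Prime) {a b : R}
    (hab : b ^ p = a) (hbϖ : b ∣ ϖ) {N : ℕ} (ha : ∀ x, a ∣ x ↔ (p : R) ∣ x ^ N) (x : R) :
    b ∣ x ↔ (p : R) ∣ x ^ (p * N) := by
  rw [pow_mul, ← ha, ← hab]
  refine ⟨fun hx => pow_dvd_pow_of_dvd hx p, fun ⟨t, ht⟩ => ?_⟩
  obtain ⟨s, hs⟩ := hϖ.2.1 t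
  have hpow_sub : (p : R) ∣ x ^ p - (b * s) ^ p := by
    rw [ht, mul_pow, ← mul_sub]
    exact dvd_mul_of_dvd_right (Ideal.mem_span_singleton.mp hs) _
  have hdiff : ϖ ∣ x - b * s :=
    (hϖ.dvd_iff_dvd_pow _).mpr (prime_dvd_sub_pow_of_dvd_pow_sub_pow hp hpow_sub)
  exact (dvd_sub_left (dvd_mul_right b s)).mp (hbϖ.trans hdiff)

end PerfectoidCond

end

-- `ϖs n` is the paper's `ϖ_{n+1}`.
theorem stmt_6_general {p : ℕ} (hp : p.Prime) (R : Type*) [CommRing R]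
    (ϖ : R) (hϖ : PerfectoidCond p R ϖ)
    (ϖs : ℕ → R) (hseq : ∀ n, ϖs (n + 1) ^ p = ϖs n)
    (h0 : Ideal.span {ϖs 0} = Ideal.span {ϖ}) :
    ∀ n : ℕ,
      (∀ x : R, x ∈ Ideal.span {ϖs n} ↔ x ^ p ^ (n + 1) ∈ Ideal.span {(p : R)}) ∧
      (∀ y : R, ∃ x : R, y - x ^ p ^ (n + 1) ∈ Ideal.span {(p : R)}) := by
  have hϖs_dvd : ∀ n, ϖs n ∣ ϖ := by
    intro n
    induction n with
    | zero => rw [← Ideal.span_singleton_le_span_singleton, h0]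
    | succ n ih => exact (hseq n ▸ dvd_pow_self _ hp.ne_zero).trans ih
  intro n
  refine ⟨?_, Ideal.exists_sub_pow_pow_mem hϖ.2.1 (n + 1)⟩
  simp only [Ideal.mem_span_singleton]
  induction n with
  | zero =>
    have h0' : ∀ x, ϖs 0 ∣ x ↔ ϖ ∣ x := fun _ =>
      ⟨(Ideal.span_singleton_le_span_singleton.mp h0.le).trans, (hϖs_dvd 0).trans⟩
    simpa only [zero_add, pow_one, h0'] using hϖ.dvd_iff_dvd_pow
  | succ n ih =>
    rw [pow_succ']
    exact hϖ.dvd_iff_dvd_pow_of_pow_eq hp (hseq n) (hϖs_dvd (n + 1)) ih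

/-- (ϖ_n) is the preimage of the kernel of the p^n-power Frobenius of R/p,
and x ↦ x^{p^n} induces an isomorphism R/ϖ_n ≅ R/p (here ϖs n = ϖ_{n+1}). -/
theorem stmt_6 {p : ℕ} (hp : p.Prime) (R : Type*) [CommRing R]
    (hnzd : (p : R) ∈ nonZeroDivisors R)
    (hc : IsAdicComplete (Ideal.span {(p : R)}) R)
    (ϖ : R) (hϖ : PerfectoidCond p R ϖ)
    (ϖs : ℕ → R) (hseq : ∀ n, ϖs (n + 1) ^ p = ϖs n)
    (h0 : Ideal.span {ϖs 0} = Ideal.span {ϖ}) :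
    ∀ n : ℕ,
      (∀ x : R, x ∈ Ideal.span {ϖs n} ↔ x ^ p ^ (n + 1) ∈ Ideal.span {(p : R)}) ∧
      (∀ y : R, ∃ x : R, y - x ^ p ^ (n + 1) ∈ Ideal.span {(p : R)}) :=
  stmt_6_general hp R ϖ hϖ ϖs hseq h0
end

section
/- Let R be a p-torsion free perfectoid ring with ϖ as in the definition. Then every element of R is congruent modulo p^2 to an element of the form x^p + p y^p with x, y ∈ R; equivalently, modulo p ϖ every element of R is a p-th power. -/
theorem exists_pow_add_mul_pow_sub_mem_span_sq {R : Type*} [CommRing R] {n : ℕ} {a : R}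
    (hsurj : ∀ y : R, ∃ x : R, y - x ^ n ∈ Ideal.span {a}) (r : R) :
    ∃ x y : R, r - (x ^ n + a * y ^ n) ∈ Ideal.span {a ^ 2} := by
  obtain ⟨x, hx⟩ := hsurj r
  obtain ⟨s, hs⟩ := Ideal.mem_span_singleton.1 hx
  obtain ⟨y, hy⟩ := hsurj s
  obtain ⟨t, ht⟩ := Ideal.mem_span_singleton.1 hy
  exact ⟨x, y, Ideal.mem_span_singleton.2 ⟨t, by linear_combination hs + a * ht⟩⟩

theorem mul_pow_sub_pow_mem_span_mul_pow {R : Type*} [CommRing R] {n : ℕ} {q ϖ a c : R}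
    (hq : q = ϖ ^ n * a) (hc : a - c ^ n ∈ Ideal.span {q}) (y : R) :
    q * y ^ n - (c * ϖ * y) ^ n ∈ Ideal.span {q * ϖ ^ n} := by
  obtain ⟨e, he⟩ := Ideal.mem_span_singleton.1 hc
  exact Ideal.mem_span_singleton.2 ⟨e * y ^ n, by linear_combination y ^ n * hq + ϖ ^ n * y ^ n * he⟩

theorem add_pow_prime_sub_add_pow_mem_span {R : Type*} [CommRing R] {p : ℕ} (hp : p.Prime)
    (x z : R) : (x + z) ^ p - (x ^ p + z ^ p) ∈ Ideal.span {(p : R) * z} := by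
  obtain ⟨t, ht⟩ := exists_add_pow_prime_eq hp x z
  exact Ideal.mem_span_singleton.2 ⟨x * t, by linear_combination ht⟩

theorem stmt_7_general {p : ℕ} (hp : p.Prime) (R : Type*) [CommRing R]
    (ϖ : R) (hϖ : PerfectoidCond p R ϖ) :
    ∀ r : R,
      (∃ x y : R, r - (x ^ p + (p : R) * y ^ p) ∈ Ideal.span {(p : R) ^ 2}) ∧
      (∃ x : R, r - x ^ p ∈ Ideal.span {(p : R) * ϖ}) := by
  obtain ⟨hspan, hsurj, -⟩ := hϖ
  obtain ⟨a, ha⟩ : ϖ ^ p ∣ (p : R) := by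
    rw [← Ideal.mem_span_singleton, hspan]
    exact Ideal.mem_span_singleton_self _
  have hϖ_dvd : ϖ ∣ (p : R) := (dvd_pow_self ϖ hp.ne_zero).trans ⟨a, ha⟩
  intro r
  obtain ⟨x, y, hxy⟩ := exists_pow_add_mul_pow_sub_mem_span_sq hsurj r
  refine ⟨⟨x, y, hxy⟩, ?_⟩
  obtain ⟨c, hc⟩ := hsurj a
  have h₁ : r - (x ^ p + p * y ^ p) ∈ Ideal.span {(p : R) * ϖ} :=
    Ideal.span_singleton_le_span_singleton.2 (by rw [sq]; exact mul_dvd_mul_left _ hϖ_dvd) hxy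
  have h₂ : p * y ^ p - (c * ϖ * y) ^ p ∈ Ideal.span {(p : R) * ϖ} :=
    Ideal.span_singleton_le_span_singleton.2 (mul_dvd_mul_left _ (dvd_pow_self ϖ hp.ne_zero))
      (mul_pow_sub_pow_mem_span_mul_pow ha hc y)
  have h₃ : (x + c * ϖ * y) ^ p - (x ^ p + (c * ϖ * y) ^ p) ∈ Ideal.span {(p : R) * ϖ} :=
    Ideal.span_singleton_le_span_singleton.2 (mul_dvd_mul_left _ ⟨c * y, by ring⟩)
      (add_pow_prime_sub_add_pow_mem_span hp x (c * ϖ * y))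
  refine ⟨x + c * ϖ * y, ?_⟩
  convert sub_mem (add_mem h₁ h₂) h₃ using 1
  ring

/-- modulo p² every element of R is of the form x^p + p·y^p;
equivalently, modulo p·ϖ every element of R is a p-th power. -/
theorem stmt_7 {p : ℕ} (hp : p.Prime) (R : Type*) [CommRing R]
    (hnzd : (p : R) ∈ nonZeroDivisors R)
    (hc : IsAdicComplete (Ideal.span {(p : R)}) R)
    (ϖ : R) (hϖ : PerfectoidCond p R ϖ) :
    ∀ r : R,
      (∃ x y : R, r - (x ^ p + (p : R) * y ^ p) ∈ Ideal.span {(p : R) ^ 2}) ∧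
      (∃ x : R, r - x ^ p ∈ Ideal.span {(p : R) * ϖ}) :=
  stmt_7_general hp R ϖ hϖ
end

section
/- Let p be a prime and R a p-torsion free commutative ring such that (ϖ^p) = (p) for some ϖ ∈ R. If R is integrally closed in R[1/p], then the map R/ϖ → R/p induced by x ↦ x^p is injective. -/
/-!
Write `x ^ p = ϖ ^ p * c`. Since `ϖ` divides `p`, it becomes a unit in `R[1/p]`, and there
`z = x / ϖ` is a root of the monic polynomial `X ^ p - c`. Integral closedness puts `z` back
in `R`, so `ϖ ∣ x`.
-/

namespace IsIntegrallyClosedIn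

theorem pow_dvd_pow_iff_of_isUnit_algebraMap {R : Type*} (A : Type*) [CommRing R] [CommRing A]
    [Algebra R A] [IsIntegrallyClosedIn R A] {n : ℕ} (hn : n ≠ 0) {a b : R}
    (ha : IsUnit (algebraMap R A a)) : a ^ n ∣ b ^ n ↔ a ∣ b := by
  refine ⟨fun ⟨c, hc⟩ ↦ ?_, fun h ↦ pow_dvd_pow_of_dvd h n⟩
  set z := algebraMap R A b * ↑ha.unit⁻¹
  have hz : z ^ n = algebraMap R A c := by
    rw [mul_pow, ← map_pow, hc, map_mul, map_pow, mul_right_comm, ← mul_pow,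
      IsUnit.mul_val_inv, one_pow, one_mul]
  obtain ⟨y, hy⟩ := exists_algebraMap_eq_of_isIntegral_pow (Nat.pos_of_ne_zero hn)
    (hz ▸ isIntegral_algebraMap)
  refine ⟨y, (isIntegrallyClosedIn_iff.mp ‹_›).1 ?_⟩
  rw [map_mul, hy, mul_left_comm, IsUnit.mul_val_inv, mul_one]

end IsIntegrallyClosedIn

/-- if R is p-torsion free, (ϖ^p) = (p), and R is integrally closed
in R[1/p], then the map R/ϖ → R/p induced by x ↦ x^p is injective. -/
theorem stmt_8 {p : ℕ} (hp : p.Prime) (R : Type*) [CommRing R]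
    (hnzd : (p : R) ∈ nonZeroDivisors R) (ϖ : R)
    (hspan : Ideal.span {ϖ ^ p} = Ideal.span {(p : R)})
    (hic : ∀ z : Localization.Away (p : R), IsIntegral R z →
      ∃ x : R, algebraMap R (Localization.Away (p : R)) x = z) :
    ∀ x : R, x ^ p ∈ Ideal.span {(p : R)} → x ∈ Ideal.span {ϖ} := by
  intro x hx
  have : IsIntegrallyClosedIn R (Localization.Away (p : R)) :=
    isIntegrallyClosedIn_iff.mpr
      ⟨IsLocalization.injective _ (Submonoid.powers_le.mpr hnzd), hic _⟩
  have hϖp : ϖ ^ p ∣ (p : R) := by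
    rw [← Ideal.mem_span_singleton, hspan]; exact Ideal.mem_span_singleton_self _
  have hϖ : IsUnit (algebraMap R (Localization.Away (p : R)) ϖ) :=
    isUnit_of_dvd_unit (map_dvd _ ((dvd_pow_self ϖ hp.ne_zero).trans hϖp))
      (IsLocalization.Away.algebraMap_isUnit _)
  rw [Ideal.mem_span_singleton, ← IsIntegrallyClosedIn.pow_dvd_pow_iff_of_isUnit_algebraMap
    (Localization.Away (p : R)) hp.ne_zero hϖ, ← Ideal.mem_span_singleton, hspan]
  exact hx
end

section
/- Let p be a prime and R a p-torsion free commutative ring such that (ϖ^p) = (p) for some ϖ ∈ R, R is integrally closed in R[1/p], and every element of R/p is a p-th power. Then the p-adic completion of R is a p-torsion free perfectoid ring. -/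
open nonZeroDivisors

section IntegrallyClosed

variable {R K : Type*} [CommRing R] [CommRing K] [Algebra R K]

/-- `x / a` is a root of `X ^ n - x ^ n / a ^ n`, hence integral over `R`. -/
theorem dvd_of_pow_dvd_pow_of_isUnit_algebraMap (hinj : Function.Injective (algebraMap R K))
    (hic : ∀ z : K, IsIntegral R z → ∃ x : R, algebraMap R K x = z) {a x : R}
    (ha : IsUnit (algebraMap R K a)) {n : ℕ} (hn : n ≠ 0) (h : a ^ n ∣ x ^ n) : a ∣ x := by
  obtain ⟨c, hc⟩ := h
  obtain ⟨u, hu⟩ := ha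
  set z : K := ↑u⁻¹ * algebraMap R K x
  have hz : algebraMap R K a * z = algebraMap R K x := by
    rw [← hu, Units.mul_inv_cancel_left]
  have hzc : z ^ n = algebraMap R K c := by
    refine (isUnit_pow_iff hn).mpr ⟨u, hu⟩ |>.mul_left_cancel ?_
    rw [← mul_pow, hz, ← map_pow, hc, map_mul, map_pow]
  obtain ⟨y, hy⟩ := hic z (.of_pow (Nat.pos_of_ne_zero hn) (hzc ▸ isIntegral_algebraMap))
  exact ⟨y, hinj (by rw [map_mul, hy, hz])⟩

end IntegrallyClosed

namespace AdicCompletion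

variable {R : Type*} [CommRing R]

theorem algebraMap_mem_nonZeroDivisors {a : R} (ha : a ∈ R⁰) :
    algebraMap R (AdicCompletion (Ideal.span {a}) R) a ∈ (AdicCompletion (Ideal.span {a}) R)⁰ := by
  rw [mem_nonZeroDivisors_iff_right]
  intro x hx
  obtain ⟨f, rfl⟩ := mk_surjective _ _ x
  refine ext_evalₐ fun n ↦ ?_
  have hdvd : a ^ n * a ∣ f.val (n + 1) * a := by
    have := congrArg (evalₐ _ (n + 1)) hx
    rwa [map_mul, evalₐ_mk, AlgHom.commutes, Ideal.Quotient.algebraMap_eq, ← map_mul,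
      _root_.map_zero, Ideal.Quotient.eq_zero_iff_mem, Ideal.span_singleton_pow,
      Ideal.mem_span_singleton, pow_succ] at this
  rw [evalₐ_mk, _root_.map_zero]
  refine (Ideal.mk_eq_mk _ (Nat.le_succ n) f).symm.trans ?_
  rw [Ideal.Quotient.eq_zero_iff_mem, Ideal.span_singleton_pow, Ideal.mem_span_singleton]
  exact (dvd_cancel_right_mem_nonZeroDivisors ha).mp hdvd

variable {I : Ideal R}

theorem algebraMap_mem_map_iff (hI : I.FG) {r : R} :
    algebraMap R (AdicCompletion I R) r ∈ I.map (algebraMap R (AdicCompletion I R)) ↔ r ∈ I := by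
  rw [← ker_evalOneₐ_eq_map I hI, RingHom.mem_ker, ← Ideal.Quotient.eq_zero_iff_mem]
  rfl

theorem exists_sub_algebraMap_mem_map (hI : I.FG) (x : AdicCompletion I R) :
    ∃ r : R, x - algebraMap R _ r ∈ I.map (algebraMap R (AdicCompletion I R)) := by
  obtain ⟨r, hr⟩ := Ideal.Quotient.mk_surjective (evalOneₐ I x)
  refine ⟨r, ?_⟩
  rw [← ker_evalOneₐ_eq_map I hI, RingHom.mem_ker]
  simp [← hr]

theorem exists_sub_pow_mem_map (hI : I.FG) {q : ℕ} (hsurj : ∀ y : R ⧸ I, ∃ x, x ^ q = y)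
    (y : AdicCompletion I R) :
    ∃ x : AdicCompletion I R, y - x ^ q ∈ I.map (algebraMap R (AdicCompletion I R)) := by
  obtain ⟨r, hr⟩ := exists_sub_algebraMap_mem_map hI y
  obtain ⟨s', hs'⟩ := hsurj (Ideal.Quotient.mk I r)
  obtain ⟨s, rfl⟩ := Ideal.Quotient.mk_surjective s'
  have hrs : r - s ^ q ∈ I := Ideal.Quotient.eq.mp (by rw [map_pow, hs'])
  refine ⟨algebraMap R _ s, ?_⟩
  rw [← map_pow, ← sub_add_sub_cancel y (algebraMap R _ r), ← map_sub]
  exact add_mem hr (Ideal.mem_map_of_mem _ hrs)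

/-- Since `x ≡ r` modulo `I`, also `x ^ q ≡ r ^ q`, so `r ^ q ∈ I` and the hypothesis on `R`
applies to `r`. -/
theorem mem_span_algebraMap_of_pow_mem_map (hI : I.FG) {q : ℕ} {ϖ : R}
    (hIϖ : I ≤ Ideal.span {ϖ}) (h : ∀ r : R, r ^ q ∈ I → r ∈ Ideal.span {ϖ})
    {x : AdicCompletion I R} (hx : x ^ q ∈ I.map (algebraMap R (AdicCompletion I R))) :
    x ∈ Ideal.span {algebraMap R (AdicCompletion I R) ϖ} := by
  have hϖ : (Ideal.span {ϖ}).map (algebraMap R (AdicCompletion I R)) =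
      Ideal.span {algebraMap R _ ϖ} := by
    rw [Ideal.map_span, Set.image_singleton]
  obtain ⟨r, hr⟩ := exists_sub_algebraMap_mem_map hI x
  have hrq : algebraMap R (AdicCompletion I R) (r ^ q) ∈ I.map (algebraMap R _) := by
    have := Ideal.mem_of_dvd _ (sub_dvd_pow_sub_pow _ _ q) hr
    rw [map_pow, ← sub_sub_cancel (x ^ q) (algebraMap R _ r ^ q)]
    exact sub_mem hx this
  rw [← sub_add_cancel x (algebraMap R _ r), ← hϖ]
  exact add_mem (Ideal.map_mono hIϖ hr)
    (Ideal.mem_map_of_mem _ (h r ((algebraMap_mem_map_iff hI).mp hrq)))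

end AdicCompletion

/-- if R is p-torsion free, (ϖ^p) = (p), R is integrally closed in R[1/p],
and Frobenius is surjective on R/p, then the p-adic completion of R is a p-torsion
free perfectoid ring. -/
theorem stmt_9 {p : ℕ} (hp : p.Prime) (R : Type*) [CommRing R]
    (hnzd : (p : R) ∈ nonZeroDivisors R) (ϖ : R)
    (hspan : Ideal.span {ϖ ^ p} = Ideal.span {(p : R)})
    (hic : ∀ z : Localization.Away (p : R), IsIntegral R z →
      ∃ x : R, algebraMap R (Localization.Away (p : R)) x = z)
    (hsurj : ∀ y : R ⧸ Ideal.span {(p : R)}, ∃ x, x ^ p = y) :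
    (p : AdicCompletion (Ideal.span {(p : R)}) R) ∈
        nonZeroDivisors (AdicCompletion (Ideal.span {(p : R)}) R) ∧
      IsAdicComplete (Ideal.span {(p : AdicCompletion (Ideal.span {(p : R)}) R)})
        (AdicCompletion (Ideal.span {(p : R)}) R) ∧
      ∃ ϖ' : AdicCompletion (Ideal.span {(p : R)}) R,
        PerfectoidCond p (AdicCompletion (Ideal.span {(p : R)}) R) ϖ' := by
  have hI : (Ideal.span {(p : R)}).FG := ⟨{(p : R)}, by simp⟩
  have hmap : (Ideal.span {(p : R)}).map (algebraMap R (AdicCompletion (Ideal.span {(p : R)}) R)) =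
      Ideal.span {(p : AdicCompletion (Ideal.span {(p : R)}) R)} := by
    rw [Ideal.map_span, Set.image_singleton, map_natCast]
  have hϖp : ϖ ^ p ∣ (p : R) :=
    Ideal.mem_span_singleton.mp (hspan ▸ Ideal.mem_span_singleton_self _)
  have hfrob : ∀ r : R, r ^ p ∈ Ideal.span {(p : R)} → r ∈ Ideal.span {ϖ} := by
    intro r hr
    rw [← hspan, Ideal.mem_span_singleton] at hr
    have hunit : IsUnit (algebraMap R (Localization.Away (p : R)) ϖ ^ p) := by
      rw [← map_pow]
      exact isUnit_of_dvd_unit (map_dvd _ hϖp) (IsLocalization.Away.algebraMap_isUnit _)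
    exact Ideal.mem_span_singleton.mpr <| dvd_of_pow_dvd_pow_of_isUnit_algebraMap
      (IsLocalization.injective _ (Submonoid.powers_le.mpr hnzd)) hic
      ((isUnit_pow_iff hp.ne_zero).mp hunit) hp.ne_zero hr
  refine ⟨map_natCast (algebraMap R (AdicCompletion (Ideal.span {(p : R)}) R)) p ▸
      AdicCompletion.algebraMap_mem_nonZeroDivisors hnzd,
    hmap ▸ AdicCompletion.isAdicComplete_self _ hI, algebraMap R _ ϖ, ?_, ?_, fun x hx ↦ ?_⟩
  · have := congrArg (Ideal.map (algebraMap R (AdicCompletion (Ideal.span {(p : R)}) R))) hspan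
    rwa [Ideal.map_span, Set.image_singleton, map_pow, hmap] at this
  · simpa only [hmap] using AdicCompletion.exists_sub_pow_mem_map hI hsurj
  · exact AdicCompletion.mem_span_algebraMap_of_pow_mem_map hI
      (Ideal.span_singleton_le_span_singleton.mpr ((dvd_pow_self ϖ hp.ne_zero).trans hϖp))
      hfrob (hmap ▸ hx)
end

section
/- Let R be a p-torsion free perfectoid ring with p-power compatible roots ϖ_n of p as above. If x ∈ R satisfies x^{p^n} ∈ p^{p^n} R for some n ≥ 1, then x ∈ p R. -/
section RootsOfDivisibility

variable {R : Type*} [CommRing R]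

theorem mem_nonZeroDivisors_of_pow_dvd {a b : R} {n : ℕ} (hn : n ≠ 0) (hab : a ^ n ∣ b)
    (hb : b ∈ nonZeroDivisors R) : a ∈ nonZeroDivisors R := by
  obtain ⟨c, rfl⟩ := hab
  have hpow : IsRegular (a ^ n) :=
    isRegular_iff_mem_nonZeroDivisors.2 (mul_mem_nonZeroDivisors.1 hb).1
  exact isRegular_iff_mem_nonZeroDivisors.1
    ((IsRegular.pow_iff (Nat.pos_of_ne_zero hn)).1 hpow)

variable {ϖ : R} {p : ℕ}

theorem pow_dvd_of_pow_mul_dvd_pow (hϖ : ϖ ∈ nonZeroDivisors R)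
    (hroot : ∀ y : R, ϖ ^ p ∣ y ^ p → ϖ ∣ y) (m : ℕ) {y : R} (hy : ϖ ^ (p * m) ∣ y ^ p) :
    ϖ ^ m ∣ y := by
  induction m generalizing y with
  | zero => exact pow_zero ϖ ▸ one_dvd y
  | succ m ih =>
    have hsplit : ϖ ^ (p * (m + 1)) = ϖ ^ p * ϖ ^ (p * m) := by ring
    obtain ⟨w, rfl⟩ := hroot y ((Dvd.intro _ hsplit.symm).trans hy)
    rw [hsplit, mul_pow, dvd_cancel_left_mem_nonZeroDivisors (pow_mem hϖ p)] at hy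
    rw [pow_succ']
    exact mul_dvd_mul_left ϖ (ih hy)

theorem pow_dvd_of_pow_mul_dvd_pow_pow (hϖ : ϖ ∈ nonZeroDivisors R)
    (hroot : ∀ y : R, ϖ ^ p ∣ y ^ p → ϖ ∣ y) (k m : ℕ) {x : R}
    (hx : ϖ ^ (p ^ k * m) ∣ x ^ p ^ k) : ϖ ^ m ∣ x := by
  induction k generalizing m with
  | zero => simpa using hx
  | succ k ih =>
    refine ih m (pow_dvd_of_pow_mul_dvd_pow hϖ hroot _ ?_)
    rwa [← mul_assoc, ← pow_succ', ← pow_mul, ← pow_succ]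

end RootsOfDivisibility

theorem stmt_11_general {p : ℕ} (hp : p.Prime) (R : Type*) [CommRing R]
    (hnzd : (p : R) ∈ nonZeroDivisors R)
    (ϖ : R) (hϖ : PerfectoidCond p R ϖ) :
    ∀ x : R, ∀ n : ℕ, 1 ≤ n → x ^ p ^ n ∈ Ideal.span {(p : R) ^ p ^ n} →
      x ∈ Ideal.span {(p : R)} := by
  intro x n _ hx
  obtain ⟨hspan, -, hroot⟩ := hϖ
  have hp_dvd : (p : R) ∣ ϖ ^ p :=
    Ideal.mem_span_singleton.1 (hspan ▸ Ideal.mem_span_singleton_self _)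
  have hϖp_dvd : ϖ ^ p ∣ (p : R) :=
    Ideal.mem_span_singleton.1 (hspan.symm ▸ Ideal.mem_span_singleton_self _)
  have hϖ : ϖ ∈ nonZeroDivisors R := mem_nonZeroDivisors_of_pow_dvd hp.ne_zero hϖp_dvd hnzd
  have hroot' : ∀ y : R, ϖ ^ p ∣ y ^ p → ϖ ∣ y := fun y hy =>
    Ideal.mem_span_singleton.1 (hroot y (Ideal.mem_span_singleton.2 (hp_dvd.trans hy)))
  have hx' : ϖ ^ (p ^ n * p) ∣ x ^ p ^ n := by
    rw [mul_comm, pow_mul]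
    exact (pow_dvd_pow_of_dvd hϖp_dvd _).trans (Ideal.mem_span_singleton.1 hx)
  exact Ideal.mem_span_singleton.2
    (hp_dvd.trans (pow_dvd_of_pow_mul_dvd_pow_pow hϖ hroot' n p hx'))

/-- in a p-torsion free perfectoid ring, if x^{p^n} ∈ p^{p^n}·R for
some n ≥ 1, then x ∈ p·R. -/
theorem stmt_11 {p : ℕ} (hp : p.Prime) (R : Type*) [CommRing R]
    (hnzd : (p : R) ∈ nonZeroDivisors R)
    (hc : IsAdicComplete (Ideal.span {(p : R)}) R)
    (ϖ : R) (hϖ : PerfectoidCond p R ϖ) :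
    ∀ x : R, ∀ n : ℕ, 1 ≤ n → x ^ p ^ n ∈ Ideal.span {(p : R) ^ p ^ n} →
      x ∈ Ideal.span {(p : R)} :=
  stmt_11_general hp R hnzd ϖ hϖ
end

section
/- Let R be a p-torsion free perfectoid ring, viewed inside the Tate ring R[1/p] (with R open). Then every topologically nilpotent element of R[1/p] lies in R. -/
/-!
A perfectoid ring is `p`-root closed in `R[1/p]`: if `p ^ j ∣ b ^ p` then `ϖ ^ j ∣ b`, by
extracting one factor `ϖ` at a time (the third perfectoid condition) and cancelling `ϖ ^ p`,
a non-zero-divisor dividing `p`. Hence `u ^ p ∈ R` forces `u ∈ R` for `u ∈ R[1/p]`, and by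
iteration `u ^ (p ^ j) ∈ R` does too. A topologically nilpotent `t` has `t ^ (p ^ j) ∈ R`
for large `j`.
-/

open nonZeroDivisors

section RootClosed

variable {R : Type*} [CommRing R] {π ϖ : R} {n : ℕ}

theorem pow_dvd_of_pow_dvd_pow (hπ : π ∈ R⁰) (hϖπ : ϖ ^ n ∣ π)
    (hroot : ∀ x : R, π ∣ x ^ n → ϖ ∣ x) :
    ∀ (j : ℕ) (b : R), π ^ j ∣ b ^ n → ϖ ^ j ∣ b := by
  obtain ⟨c, hc⟩ := hϖπ
  have hϖn : ϖ ^ n ∈ R⁰ := (mul_mem_nonZeroDivisors.mp (hc ▸ hπ)).1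
  intro j
  induction j with
  | zero => simp
  | succ j ih =>
    rintro b ⟨r, hr⟩
    obtain ⟨d, rfl⟩ := hroot b ⟨π ^ j * r, by rw [hr]; ring⟩
    have hd : d ^ n = π ^ j * (c * r) := by
      refine (mul_cancel_left_mem_nonZeroDivisors hϖn).mp ?_
      rw [← mul_pow, hr, pow_succ, hc]
      ring
    obtain ⟨e, rfl⟩ := ih d ⟨c * r, hd⟩
    exact ⟨e, by ring⟩

variable (S : Type*) [CommRing S] [Algebra R S] [IsLocalization.Away π S]

theorem mem_range_of_pow_mem_range (hπ : π ∈ R⁰) (hϖπ : ϖ ^ n ∣ π) (hπϖ : π ∣ ϖ ^ n)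
    (hroot : ∀ x : R, π ∣ x ^ n → ϖ ∣ x) {u : S}
    (hu : u ^ n ∈ (algebraMap R S).range) : u ∈ (algebraMap R S).range := by
  obtain ⟨x, hx⟩ := hu
  obtain ⟨N, b, hb⟩ := IsLocalization.Away.surj π u
  have hinj : Function.Injective (algebraMap R S) :=
    IsLocalization.injective S (Submonoid.powers_le.mpr hπ)
  have hbn : π ^ (N * n) ∣ b ^ n := by
    refine ⟨x, hinj ?_⟩
    rw [map_mul, map_pow, hx, map_pow, ← hb]
    ring
  obtain ⟨e, rfl⟩ : π ^ N ∣ b := by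
    refine dvd_trans ?_ (pow_dvd_of_pow_dvd_pow hπ hϖπ hroot _ _ hbn)
    rw [mul_comm, pow_mul]
    exact pow_dvd_pow_of_dvd hπϖ N
  refine ⟨e, ((IsLocalization.Away.algebraMap_isUnit π).pow N).mul_left_inj.mp ?_⟩
  rw [hb, map_mul, map_pow, mul_comm]

theorem mem_range_of_pow_pow_mem_range (hπ : π ∈ R⁰) (hϖπ : ϖ ^ n ∣ π) (hπϖ : π ∣ ϖ ^ n)
    (hroot : ∀ x : R, π ∣ x ^ n → ϖ ∣ x) {u : S} :
    ∀ j : ℕ, u ^ (n ^ j) ∈ (algebraMap R S).range → u ∈ (algebraMap R S).range := by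
  intro j
  induction j with
  | zero => simp
  | succ j ih =>
    intro hu
    refine ih (mem_range_of_pow_mem_range S hπ hϖπ hπϖ hroot ?_)
    rwa [← pow_mul, ← pow_succ]

end RootClosed

theorem stmt_12_general {p : ℕ} (hp : p.Prime) (R : Type*) [CommRing R]
    (hnzd : (p : R) ∈ nonZeroDivisors R)
    (ϖ : R) (hϖ : PerfectoidCond p R ϖ)
    (t : Localization.Away (p : R))
    (ht : ∀ k : ℕ, ∃ m₀ : ℕ, ∀ m : ℕ, m₀ ≤ m → ∃ r : R,
      t ^ m = algebraMap R (Localization.Away (p : R)) ((p : R) ^ k * r)) :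
    ∃ x : R, algebraMap R (Localization.Away (p : R)) x = t := by
  obtain ⟨hspan, -, hroot⟩ := hϖ
  have hϖπ : ϖ ^ p ∣ (p : R) := Ideal.span_singleton_le_span_singleton.mp hspan.ge
  have hπϖ : (p : R) ∣ ϖ ^ p := Ideal.span_singleton_le_span_singleton.mp hspan.le
  obtain ⟨j, hj⟩ := ht 0
  obtain ⟨r, hr⟩ := hj (p ^ j) (Nat.lt_pow_self hp.one_lt).le
  have hroot' (x : R) (hx : (p : R) ∣ x ^ p) : ϖ ∣ x :=
    Ideal.mem_span_singleton.mp (hroot x (Ideal.mem_span_singleton.mpr hx))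
  exact mem_range_of_pow_pow_mem_range _ hnzd hϖπ hπϖ hroot' j ⟨(p : R) ^ 0 * r, hr.symm⟩

/-- every topologically nilpotent element of the Tate ring R[1/p]
lies in R. -/
theorem stmt_12 {p : ℕ} (hp : p.Prime) (R : Type*) [CommRing R]
    (hnzd : (p : R) ∈ nonZeroDivisors R)
    (hc : IsAdicComplete (Ideal.span {(p : R)}) R)
    (ϖ : R) (hϖ : PerfectoidCond p R ϖ)
    (t : Localization.Away (p : R))
    (ht : ∀ k : ℕ, ∃ m₀ : ℕ, ∀ m : ℕ, m₀ ≤ m → ∃ r : R,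
      t ^ m = algebraMap R (Localization.Away (p : R)) ((p : R) ^ k * r)) :
    ∃ x : R, algebraMap R (Localization.Away (p : R)) x = t :=
  stmt_12_general hp R hnzd ϖ hϖ t ht
end

section
/- Let R be a p-torsion free perfectoid ring with compatible roots ϖ_n of p, and let R[1/p]° denote the subring of powerbounded elements of the Tate ring R[1/p]. Then for every n ≥ 1, ϖ_n kills the cokernel of the inclusion R ⊆ R[1/p]°; i.e., ϖ_n · R[1/p]° ⊆ R. -/
/-- An element of R[1/p] is powerbounded if its powers lie in p^{-k}·R for some k. -/
def PowerBounded (p : ℕ) (R : Type*) [CommRing R] (t : Localization.Away (p : R)) : Prop :=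
  ∃ k : ℕ, ∀ m : ℕ, 1 ≤ m → ∃ r : R,
    algebraMap R (Localization.Away (p : R)) ((p : R) ^ k) * t ^ m =
      algebraMap R (Localization.Away (p : R)) r

/-!
Write `t = a / p^J` with `a ∈ R`. Powerboundedness gives `p^k a^m ∈ p^{Jm} R` for all `m`; taking
`m = p^{n+1+k}` and using `p ∣ ϖₙ^{p^{n+1}}` (so `p^k ∣ ϖₙ^m`) yields `p^{Jm} ∣ (ϖₙ a)^m`.
Since `(p) = (ϖ^p)` and `p ∣ x^p` forces `ϖ ∣ x`, one can extract `p`-th roots of divisibility by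
powers of `ϖ` one step at a time, so `p^J ∣ ϖₙ a`, i.e. `ϖₙ t ∈ R`.
-/

section Divisibility

variable {R : Type*} [CommRing R]

theorem IsLeftRegular.dvd_mul_of_mul_eq_mul {q b c r w : R} (hq : IsLeftRegular q)
    (h : q * b = r * c) (hw : q ∣ w) : c ∣ w * b := by
  refine hq.dvd_cancel_left.mp ?_
  rw [mul_left_comm, h, mul_comm r]
  exact mul_dvd_mul hw (dvd_mul_right c r)

variable {p : ℕ} {ϖ : R}

theorem pow_dvd_of_pow_mul_dvd_pow_s13 (hreg : IsLeftRegular (ϖ ^ p))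
    (hroot : ∀ x : R, ϖ ^ p ∣ x ^ p → ϖ ∣ x) : ∀ (c : ℕ) {z : R}, ϖ ^ (p * c) ∣ z ^ p → ϖ ^ c ∣ z
  | 0, _, _ => by simp
  | c + 1, z, h => by
    rw [mul_add_one, pow_add, mul_comm] at h
    obtain ⟨y, rfl⟩ := hroot z (dvd_of_mul_right_dvd h)
    rw [mul_pow] at h
    rw [pow_succ, mul_comm ϖ]
    exact mul_dvd_mul_right (pow_dvd_of_pow_mul_dvd_pow_s13 hreg hroot c
      (hreg.dvd_cancel_left.mp h)) ϖ

theorem pow_dvd_of_pow_mul_dvd_pow_pow_s13 (hreg : IsLeftRegular (ϖ ^ p))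
    (hroot : ∀ x : R, ϖ ^ p ∣ x ^ p → ϖ ∣ x) :
    ∀ (i c : ℕ) {z : R}, ϖ ^ (p ^ i * c) ∣ z ^ p ^ i → ϖ ^ c ∣ z
  | 0, c, z, h => by simpa using h
  | i + 1, c, z, h => by
    refine pow_dvd_of_pow_mul_dvd_pow_s13 hreg hroot c
      (pow_dvd_of_pow_mul_dvd_pow_pow_s13 hreg hroot i (c := p * c) ?_)
    rwa [← pow_mul, ← mul_assoc, ← pow_succ, ← pow_succ']

end Divisibility

section Perfectoid

variable {p : ℕ} {R : Type*} [CommRing R] {ϖ : R}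

theorem natCast_pow_dvd_of_pow_dvd_pow_pow (hreg : IsLeftRegular (p : R)) (hϖp : ϖ ^ p ∣ (p : R))
    (hpϖ : (p : R) ∣ ϖ ^ p) (hroot : ∀ x : R, (p : R) ∣ x ^ p → ϖ ∣ x) (i J : ℕ) {x : R}
    (h : (p : R) ^ (J * p ^ i) ∣ x ^ p ^ i) : (p : R) ^ J ∣ x := by
  have hregϖ : IsLeftRegular (ϖ ^ p) := by
    obtain ⟨d, hd⟩ := hϖp
    exact IsLeftRegular.of_mul (a := d) (by rwa [mul_comm, ← hd])
  have hϖ : ϖ ^ (p * J) ∣ x := by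
    refine pow_dvd_of_pow_mul_dvd_pow_pow_s13 hregϖ (fun y hy ↦ hroot y (hpϖ.trans hy)) i _ ?_
    rw [show p ^ i * (p * J) = p * (J * p ^ i) by ring, pow_mul]
    exact (pow_dvd_pow_of_dvd hϖp _).trans h
  rw [pow_mul] at hϖ
  exact (pow_dvd_pow_of_dvd hpϖ J).trans hϖ

theorem pow_dvd_mul_of_forall_pow_mul_pow_eq (hp : 1 < p) (hreg : IsLeftRegular (p : R))
    (hϖp : ϖ ^ p ∣ (p : R)) (hpϖ : (p : R) ∣ ϖ ^ p) (hroot : ∀ x : R, (p : R) ∣ x ^ p → ϖ ∣ x)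
    {w : R} {j : ℕ} (hw : (p : R) ∣ w ^ p ^ j) {a : R} {k J : ℕ}
    (hbdd : ∀ m, 1 ≤ m → ∃ r : R, (p : R) ^ k * a ^ m = r * (p : R) ^ (J * m)) :
    (p : R) ^ J ∣ w * a := by
  obtain ⟨r, hr⟩ := hbdd (p ^ (j + k)) (Nat.one_le_pow _ _ (by omega))
  have hwm : (p : R) ^ k ∣ w ^ p ^ (j + k) := calc
    (p : R) ^ k ∣ (p : R) ^ p ^ k := pow_dvd_pow _ (Nat.lt_pow_self hp).le
    _ ∣ (w ^ p ^ j) ^ p ^ k := pow_dvd_pow_of_dvd hw _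
    _ = w ^ p ^ (j + k) := by rw [← pow_mul, ← pow_add]
  refine natCast_pow_dvd_of_pow_dvd_pow_pow hreg hϖp hpϖ hroot (j + k) J ?_
  rw [mul_pow]
  exact (hreg.pow k).dvd_mul_of_mul_eq_mul hr hwm

end Perfectoid

section Localization

variable {p : ℕ} {R : Type*} [CommRing R]

theorem PowerBounded.exists_pow_mul_pow_eq (hnzd : (p : R) ∈ nonZeroDivisors R)
    {t : Localization.Away (p : R)} (ht : PowerBounded p R t) {J : ℕ} {a : R}
    (ha : t * algebraMap R _ (p : R) ^ J = algebraMap R _ a) :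
    ∃ k, ∀ m, 1 ≤ m → ∃ r : R, (p : R) ^ k * a ^ m = r * (p : R) ^ (J * m) := by
  obtain ⟨k, hk⟩ := ht
  refine ⟨k, fun m hm ↦ ?_⟩
  obtain ⟨r, hr⟩ := hk m hm
  refine ⟨r, IsLocalization.injective (Localization.Away (p : R))
    (Submonoid.powers_le.mpr hnzd) ?_⟩
  simp only [map_mul, map_pow] at hr ⊢
  rw [← ha, ← hr]
  ring

theorem exists_algebraMap_mul_eq_of_pow_dvd {t : Localization.Away (p : R)} {J : ℕ} {a w : R}
    (ha : t * algebraMap R _ (p : R) ^ J = algebraMap R _ a) (h : (p : R) ^ J ∣ w * a) :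
    ∃ r : R, algebraMap R _ w * t = algebraMap R _ r := by
  obtain ⟨b, hb⟩ := h
  refine ⟨b, ((IsLocalization.Away.algebraMap_isUnit (p : R)).pow J).mul_left_cancel ?_⟩
  have hb' := congrArg (algebraMap R (Localization.Away (p : R))) hb
  simp only [map_mul, map_pow] at hb'
  linear_combination algebraMap R (Localization.Away (p : R)) w * ha + hb'

end Localization

theorem stmt_13_general {p : ℕ} (hp : p.Prime) (R : Type*) [CommRing R]
    (hnzd : (p : R) ∈ nonZeroDivisors R)
    (ϖ : R) (hϖ : PerfectoidCond p R ϖ)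
    (ϖs : ℕ → R)
    (hspan : ∀ n, Ideal.span {ϖs n ^ p ^ (n + 1)} = Ideal.span {(p : R)}) :
    ∀ t : Localization.Away (p : R), PowerBounded p R t →
      ∀ n : ℕ, ∃ r : R,
        algebraMap R (Localization.Away (p : R)) (ϖs n) * t =
          algebraMap R (Localization.Away (p : R)) r := by
  obtain ⟨hspanϖ, -, hroot⟩ := hϖ
  have hreg : IsLeftRegular (p : R) := (isRegular_iff_mem_nonZeroDivisors.mpr hnzd).left
  intro t ht n
  obtain ⟨J, a, ha⟩ := IsLocalization.Away.surj (p : R) t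
  obtain ⟨k, hk⟩ := ht.exists_pow_mul_pow_eq hnzd ha
  exact exists_algebraMap_mul_eq_of_pow_dvd ha (pow_dvd_mul_of_forall_pow_mul_pow_eq hp.one_lt hreg
    (Ideal.span_singleton_le_span_singleton.mp hspanϖ.ge)
    (Ideal.span_singleton_le_span_singleton.mp hspanϖ.le)
    (fun x hx ↦ Ideal.mem_span_singleton.mp (hroot x (Ideal.mem_span_singleton.mpr hx)))
    (Ideal.span_singleton_le_span_singleton.mp (hspan n).le) hk)

/-- each ϖ_n kills the cokernel of R ⊆ R[1/p]°, i.e.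
ϖ_n · R[1/p]° ⊆ R. -/
theorem stmt_13 {p : ℕ} (hp : p.Prime) (R : Type*) [CommRing R]
    (hnzd : (p : R) ∈ nonZeroDivisors R)
    (hc : IsAdicComplete (Ideal.span {(p : R)}) R)
    (ϖ : R) (hϖ : PerfectoidCond p R ϖ)
    (ϖs : ℕ → R) (hseq : ∀ n, ϖs (n + 1) ^ p = ϖs n)
    (h0 : Ideal.span {ϖs 0} = Ideal.span {ϖ})
    (hspan : ∀ n, Ideal.span {ϖs n ^ p ^ (n + 1)} = Ideal.span {(p : R)}) :
    ∀ t : Localization.Away (p : R), PowerBounded p R t →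
      ∀ n : ℕ, ∃ r : R,
        algebraMap R (Localization.Away (p : R)) (ϖs n) * t =
          algebraMap R (Localization.Away (p : R)) r :=
  stmt_13_general hp R hnzd ϖ hϖ ϖs hspan
end
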